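/- Let p₁ < p₂, ρ > 1, μ ∈ (0,1]. Let I be an open interval containing [p₁,p₂], p₀ ∈ I \ [p₁,p₂], and ψ ∈ C²(I) with ψ'(p) = |p−p₀|^{ρ−1} ψ̃(p) where |ψ̃| is continuous and nonvanishing on I, and ψ' monotone on [p₁,p₂]. Let U(p) = (p−p₁)^{μ−1} ũ(p) with ũ continuous on [p₁,p₂], differentiable on (p₁,p₂), ũ' ∈ L¹(p₁,p₂). Then for all ω > 0, |∫_{p₁}^{p₂} U(p) e^{iωψ(p)} dp| ≤ C̃ ω^{−μ/ρ}, with C̃ = (2/μ)‖ũ‖_{L^∞} + (4‖ũ‖_{L^∞} + ‖ũ'‖_{L¹}) (min_{[p₁,p₂]} |ψ̃|)^{−1}, uniformly in the position of p₀ outside [p₁,p₂]. -/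

import Mathlib

/-!
Cut `[p₁, p₂]` at distance `δ = ω^(-1/ρ)` from both ends. On each end piece the integrable
singularity alone gives `‖ũ‖_∞ δ^μ / μ` (subadditivity of `t ↦ t^μ`). On the middle piece
`|p - p₀| ≥ δ` since `p₀ ∉ [p₁, p₂]`, so `|ψ'| ≥ m δ^(ρ-1)`, while the amplitude
`(p - p₁)^(μ-1) ũ` is bounded by `δ^(μ-1) ‖ũ‖_∞` and has total variation at most
`δ^(μ-1) (‖ũ‖_∞ + ‖ũ'‖_{L¹})`. There van der Corput's argument applies: integrate by parts
against the derivative of `e^{iωψ} / (iωψ')`; the factor `1/ψ'` has total variation at most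
`sup |1/ψ'|` because `ψ'` is monotone and of one sign, so the middle piece costs
`(ω m δ^(ρ-1))⁻¹` times the amplitude bounds. As `ω δ^ρ = 1`, both pieces are
`O(δ^μ) = O(ω^(-μ/ρ))`, with constants that do not see `p₀`.
-/

open MeasureTheory Set intervalIntegral

theorem abs_sub_le_of_mul_nonneg {x y c : ℝ} (hxy : 0 ≤ x * y) (hx : |x| ≤ c) (hy : |y| ≤ c) :
    |x - y| ≤ c := by
  rw [abs_le] at *
  constructor <;> nlinarith

theorem IsCompact.norm_le_iSup {X E : Type*} [TopologicalSpace X] [SeminormedAddGroup E]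
    {s : Set X} {f : X → E} {x : X} (hs : IsCompact s) (hf : ContinuousOn f s) (hx : x ∈ s) :
    ‖f x‖ ≤ ⨆ p : s, ‖f p‖ := by
  refine le_ciSup (f := fun p : s => ‖f p‖) ?_ ⟨x, hx⟩
  have := hs.bddAbove_image hf.norm
  rwa [image_eq_range] at this

theorem norm_cexp_I_mul_ofReal_mul (ω t : ℝ) : ‖Complex.exp (Complex.I * ω * t)‖ = 1 := by
  rw [show Complex.I * ω * t = ((ω * t : ℝ) : ℂ) * Complex.I by push_cast; ring]
  exact Complex.norm_exp_ofReal_mul_I _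

theorem ContinuousOn.mul_pos_of_ne_zero {g : ℝ → ℝ} {a b : ℝ} (hab : a ≤ b)
    (hg : ContinuousOn g (Icc a b)) (hg0 : ∀ x ∈ Icc a b, g x ≠ 0) : 0 < g a * g b := by
  by_contra! hneg
  have h0 : (0 : ℝ) ∈ uIcc (g a) (g b) := by
    rcases mul_nonpos_iff.1 hneg with ⟨h1, h2⟩ | ⟨h1, h2⟩
    exacts [mem_uIcc.2 (Or.inr ⟨h2, h1⟩), mem_uIcc.2 (Or.inl ⟨h1, h2⟩)]
  obtain ⟨c, hc, hgc⟩ := intermediate_value_uIcc (uIcc_of_le hab ▸ hg) h0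
  exact hg0 c (uIcc_of_le hab ▸ hc) hgc

variable {a b : ℝ}

theorem IntervalIntegrable.ofReal {f : ℝ → ℝ} (hf : IntervalIntegrable f volume a b) :
    IntervalIntegrable (fun x => (f x : ℂ)) volume a b :=
  ⟨hf.1.ofReal, hf.2.ofReal⟩

theorem integral_abs_deriv_eq_abs_sub {r r' : ℝ → ℝ} (hab : a ≤ b)
    (hr : ∀ x ∈ Icc a b, HasDerivAt r (r' x) x) (hr' : IntervalIntegrable r' volume a b)
    (hsign : (∀ x ∈ Icc a b, 0 ≤ r' x) ∨ ∀ x ∈ Icc a b, r' x ≤ 0) :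
    ∫ x in a..b, |r' x| = |r b - r a| := by
  rw [← integral_eq_sub_of_hasDerivAt (fun x hx => hr x (uIcc_of_le hab ▸ hx)) hr']
  rcases hsign with hpos | hneg
  · rw [integral_congr fun x hx => abs_of_nonneg (hpos x (uIcc_of_le hab ▸ hx)),
      abs_of_nonneg (integral_nonneg hab hpos)]
  · rw [integral_congr fun x hx => abs_of_nonpos (hneg x (uIcc_of_le hab ▸ hx)),
      intervalIntegral.integral_neg, abs_of_nonpos (neg_nonneg.1 ?_)]
    rw [← intervalIntegral.integral_neg]
    exact integral_nonneg hab fun x hx => neg_nonneg.2 (hneg x hx)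

theorem intervalIntegrable_deriv_ofReal_mul {r r' : ℝ → ℝ} {h h' : ℝ → ℂ} (hab : a ≤ b)
    (hr : ∀ x ∈ Icc a b, HasDerivAt r (r' x) x) (hr' : IntervalIntegrable r' volume a b)
    (hh : ∀ x ∈ Icc a b, HasDerivAt h (h' x) x) (hh' : IntervalIntegrable h' volume a b) :
    IntervalIntegrable (fun x => (r' x : ℂ) * h x + r x * h' x) volume a b := by
  have hrc : ContinuousOn r (uIcc a b) :=
    uIcc_of_le hab ▸ fun x hx => (hr x hx).continuousAt.continuousWithinAt
  have hhc : ContinuousOn h (uIcc a b) :=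
    uIcc_of_le hab ▸ fun x hx => (hh x hx).continuousAt.continuousWithinAt
  exact (hr'.ofReal.mul_continuousOn hhc).add
    (hh'.continuousOn_mul (Complex.continuous_ofReal.comp_continuousOn hrc))

theorem integral_norm_deriv_ofReal_mul_le {r r' : ℝ → ℝ} {h h' : ℝ → ℂ} {R H : ℝ} (hab : a ≤ b)
    (hr : ∀ x ∈ Icc a b, HasDerivAt r (r' x) x) (hr' : IntervalIntegrable r' volume a b)
    (hsign : (∀ x ∈ Icc a b, 0 ≤ r' x) ∨ ∀ x ∈ Icc a b, r' x ≤ 0)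
    (hrR : ∀ x ∈ Icc a b, |r x| ≤ R) (hrab : 0 ≤ r a * r b)
    (hh : ∀ x ∈ Icc a b, HasDerivAt h (h' x) x) (hh' : IntervalIntegrable h' volume a b)
    (hhH : ∀ x ∈ Icc a b, ‖h x‖ ≤ H) :
    ∫ x in a..b, ‖(r' x : ℂ) * h x + r x * h' x‖ ≤ R * (H + ∫ x in a..b, ‖h' x‖) := by
  have hvar : ∫ x in a..b, |r' x| ≤ R := by
    rw [integral_abs_deriv_eq_abs_sub hab hr hr' hsign]
    exact abs_sub_le_of_mul_nonneg (by linarith) (hrR b (right_mem_Icc.2 hab))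
      (hrR a (left_mem_Icc.2 hab))
  have hH : 0 ≤ H := (norm_nonneg _).trans (hhH a (left_mem_Icc.2 hab))
  calc ∫ x in a..b, ‖(r' x : ℂ) * h x + r x * h' x‖
      ≤ ∫ x in a..b, (|r' x| * H + R * ‖h' x‖) := by
        refine integral_mono_on hab ?_ ?_ fun x hx => ?_
        · exact (intervalIntegrable_deriv_ofReal_mul hab hr hr' hh hh').norm
        · exact (hr'.abs.mul_const H).add (hh'.norm.const_mul R)
        · refine (norm_add_le _ _).trans (add_le_add ?_ ?_) <;>
            simp only [norm_mul, Complex.norm_real, Real.norm_eq_abs]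
          · exact mul_le_mul_of_nonneg_left (hhH x hx) (abs_nonneg _)
          · exact mul_le_mul_of_nonneg_right (hrR x hx) (norm_nonneg _)
    _ = (∫ x in a..b, |r' x|) * H + R * ∫ x in a..b, ‖h' x‖ := by
        rw [integral_add (hr'.abs.mul_const H) (hh'.norm.const_mul R),
          intervalIntegral.integral_mul_const, intervalIntegral.integral_const_mul]
    _ ≤ R * (H + ∫ x in a..b, ‖h' x‖) := by nlinarith

theorem norm_integral_mul_deriv_le {A : Type*} [NormedRing A] [NormedAlgebra ℝ A] [CompleteSpace A]
    {u u' v v' : ℝ → A} (hab : a ≤ b)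
    (hu : ∀ x ∈ Icc a b, HasDerivAt u (u' x) x) (hv : ∀ x ∈ Icc a b, HasDerivAt v (v' x) x)
    (hu' : IntervalIntegrable u' volume a b) (hv' : IntervalIntegrable v' volume a b)
    (hv1 : ∀ x ∈ Icc a b, ‖v x‖ ≤ 1) :
    ‖∫ x in a..b, u x * v' x‖ ≤ ‖u a‖ + ‖u b‖ + ∫ x in a..b, ‖u' x‖ := by
  have hIcc : uIcc a b = Icc a b := uIcc_of_le hab
  have hnorm : ∀ x ∈ Icc a b, ∀ w : A, ‖w * v x‖ ≤ ‖w‖ := fun x hx w =>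
    (norm_mul_le _ _).trans (mul_le_of_le_one_right (norm_nonneg _) (hv1 x hx))
  rw [integral_mul_deriv_eq_deriv_mul (hIcc ▸ hu) (hIcc ▸ hv) hu' hv']
  calc ‖u b * v b - u a * v a - ∫ x in a..b, u' x * v x‖
      ≤ ‖u b * v b‖ + ‖u a * v a‖ + ‖∫ x in a..b, u' x * v x‖ :=
        (norm_sub_le _ _).trans (by gcongr; exact norm_sub_le _ _)
    _ ≤ ‖u b‖ + ‖u a‖ + ∫ x in a..b, ‖u' x‖ := by
        gcongr
        · exact hnorm b (right_mem_Icc.2 hab) _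
        · exact hnorm a (left_mem_Icc.2 hab) _
        · exact norm_integral_le_of_norm_le hab
            (ae_of_all _ fun x hx => hnorm x (Ioc_subset_Icc_self hx) _) hu'.norm
    _ = ‖u a‖ + ‖u b‖ + ∫ x in a..b, ‖u' x‖ := by ring

theorem norm_integral_mul_deriv_cexp_le {φ φ' : ℝ → ℝ} {u u' : ℝ → ℂ} {ω : ℝ} (hab : a ≤ b)
    (hφ : ∀ x ∈ Icc a b, HasDerivAt φ (φ' x) x) (hφ' : ContinuousOn φ' (Icc a b))
    (hu : ∀ x ∈ Icc a b, HasDerivAt u (u' x) x) (hu' : IntervalIntegrable u' volume a b) :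
    ‖∫ x in a..b, u x * (ω * φ' x * Complex.exp (Complex.I * ω * φ x))‖ ≤
      ‖u a‖ + ‖u b‖ + ∫ x in a..b, ‖u' x‖ := by
  have hv : ∀ x ∈ Icc a b, HasDerivAt (fun x => -Complex.I * Complex.exp (Complex.I * ω * φ x))
      (ω * φ' x * Complex.exp (Complex.I * ω * φ x)) x := fun x hx =>
    ((((hφ x hx).ofReal_comp).const_mul (Complex.I * ω)).cexp.const_mul (-Complex.I)).congr_deriv
      (by ring_nf; rw [Complex.I_sq]; ring)
  have hφc : ContinuousOn φ (Icc a b) := fun x hx => (hφ x hx).continuousAt.continuousWithinAt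
  refine norm_integral_mul_deriv_le hab hu hv hu'
    (ContinuousOn.intervalIntegrable (uIcc_of_le hab ▸ by fun_prop)) fun x _ => ?_
  rw [norm_mul, norm_neg, Complex.norm_I, norm_cexp_I_mul_ofReal_mul, one_mul]

theorem mul_eq_ofReal_inv_mul_mul_mul {x y : ℝ} (hxy : x * y ≠ 0) (z w : ℂ) :
    z * w = ((x * y)⁻¹ : ℝ) * z * (x * y * w) := by
  have hx : (x : ℂ) ≠ 0 := by exact_mod_cast left_ne_zero_of_mul hxy
  have hy : (y : ℂ) ≠ 0 := by exact_mod_cast right_ne_zero_of_mul hxy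
  push_cast
  field_simp

theorem norm_integral_mul_cexp_le_of_hasDerivAt {φ φ' φ'' : ℝ → ℝ} {f f' : ℝ → ℂ} {ω lam B : ℝ}
    (hab : a ≤ b) (hφ : ∀ x ∈ Icc a b, HasDerivAt φ (φ' x) x)
    (hφ' : ∀ x ∈ Icc a b, HasDerivAt φ' (φ'' x) x) (hφ'' : ContinuousOn φ'' (Icc a b))
    (hsign : (∀ x ∈ Icc a b, 0 ≤ φ'' x) ∨ ∀ x ∈ Icc a b, φ'' x ≤ 0)
    (hω : 0 < ω) (hlam : 0 < lam) (hlb : ∀ x ∈ Icc a b, lam ≤ |φ' x|)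
    (hf : ∀ x ∈ Icc a b, HasDerivAt f (f' x) x) (hf' : IntervalIntegrable f' volume a b)
    (hB : ∀ x ∈ Icc a b, ‖f x‖ ≤ B) :
    ‖∫ x in a..b, f x * Complex.exp (Complex.I * ω * φ x)‖ ≤
      (ω * lam)⁻¹ * (3 * B + ∫ x in a..b, ‖f' x‖) := by
  have hne : ∀ x ∈ Icc a b, ω * φ' x ≠ 0 := fun x hx =>
    mul_ne_zero hω.ne' (abs_pos.1 (hlam.trans_le (hlb x hx)))
  have hφ'c : ContinuousOn φ' (Icc a b) := fun x hx => (hφ' x hx).continuousAt.continuousWithinAt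
  set r : ℝ → ℝ := fun x => (ω * φ' x)⁻¹
  set r' : ℝ → ℝ := fun x => -(ω * φ'' x) / (ω * φ' x) ^ 2
  have hr : ∀ x ∈ Icc a b, HasDerivAt r (r' x) x := fun x hx =>
    ((hφ' x hx).const_mul ω).inv (hne x hx)
  have hr' : IntervalIntegrable r' volume a b := by
    refine ContinuousOn.intervalIntegrable (uIcc_of_le hab ▸ ?_)
    exact ((hφ''.const_smul ω).neg).div ((hφ'c.const_smul ω).pow 2) fun x hx =>
      pow_ne_zero 2 (hne x hx)
  have hr'sign : (∀ x ∈ Icc a b, 0 ≤ r' x) ∨ ∀ x ∈ Icc a b, r' x ≤ 0 := by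
    refine hsign.symm.imp (fun h x hx => ?_) (fun h x hx => ?_)
    · exact div_nonneg (neg_nonneg.2 (mul_nonpos_of_nonneg_of_nonpos hω.le (h x hx))) (sq_nonneg _)
    · exact div_nonpos_of_nonpos_of_nonneg (neg_nonpos.2 (mul_nonneg hω.le (h x hx))) (sq_nonneg _)
  have hrR : ∀ x ∈ Icc a b, |r x| ≤ (ω * lam)⁻¹ := fun x hx => by
    rw [abs_inv, abs_mul, abs_of_pos hω]
    exact inv_anti₀ (mul_pos hω hlam) (mul_le_mul_of_nonneg_left (hlb x hx) hω.le)
  have hrab : 0 ≤ r a * r b := by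
    rw [← mul_inv, inv_nonneg, mul_mul_mul_comm]
    exact mul_nonneg (mul_self_nonneg ω)
      (hφ'c.mul_pos_of_ne_zero hab fun x hx h0 => hne x hx (by rw [h0, mul_zero])).le
  have hfr : ∀ x ∈ uIcc a b, f x * Complex.exp (Complex.I * ω * φ x) =
      r x * f x * (ω * φ' x * Complex.exp (Complex.I * ω * φ x)) := fun x hx =>
    mul_eq_ofReal_inv_mul_mul_mul (hne x (uIcc_of_le hab ▸ hx)) _ _
  have hu : ∀ x ∈ Icc a b, ‖(r x : ℂ) * f x‖ ≤ (ω * lam)⁻¹ * B := fun x hx => by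
    rw [norm_mul, Complex.norm_real, Real.norm_eq_abs]
    exact mul_le_mul (hrR x hx) (hB x hx) (norm_nonneg _) (by positivity)
  rw [integral_congr hfr]
  calc _ ≤ _ := norm_integral_mul_deriv_cexp_le hab hφ hφ'c
        (fun x hx => ((hr x hx).ofReal_comp).mul (hf x hx))
        (intervalIntegrable_deriv_ofReal_mul hab hr hr' hf hf')
    _ ≤ (ω * lam)⁻¹ * B + (ω * lam)⁻¹ * B + (ω * lam)⁻¹ * (B + ∫ x in a..b, ‖f' x‖) := by
      gcongr
      · exact hu a (left_mem_Icc.2 hab)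
      · exact hu b (right_mem_Icc.2 hab)
      · exact integral_norm_deriv_ofReal_mul_le hab hr hr' hr'sign hrR hrab hf hf' hB
    _ = (ω * lam)⁻¹ * (3 * B + ∫ x in a..b, ‖f' x‖) := by ring

theorem norm_integral_mul_cexp_le {φ : ℝ → ℝ} {I : Set ℝ} {f f' : ℝ → ℂ} {ω lam B : ℝ}
    (hI : IsOpen I) (hφ : ContDiffOn ℝ 2 φ I) (hab : a ≤ b) (hsub : Icc a b ⊆ I)
    (hmono : MonotoneOn (deriv φ) (Icc a b) ∨ AntitoneOn (deriv φ) (Icc a b))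
    (hω : 0 < ω) (hlam : 0 < lam) (hlb : ∀ x ∈ Icc a b, lam ≤ |deriv φ x|)
    (hf : ∀ x ∈ Icc a b, HasDerivAt f (f' x) x) (hf' : IntervalIntegrable f' volume a b)
    (hB : ∀ x ∈ Icc a b, ‖f x‖ ≤ B) :
    ‖∫ x in a..b, f x * Complex.exp (Complex.I * ω * φ x)‖ ≤
      (ω * lam)⁻¹ * (3 * B + ∫ x in a..b, ‖f' x‖) := by
  rcases hab.eq_or_lt with rfl | hab
  · simp only [integral_same, norm_zero, add_zero]
    have := (norm_nonneg _).trans (hB a (left_mem_Icc.2 le_rfl))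
    positivity
  have hφ' : ContDiffOn ℝ 1 (deriv φ) I := hφ.deriv_of_isOpen hI (by norm_num)
  have hderiv : ∀ {g : ℝ → ℝ}, ContDiffOn ℝ 1 g I → ∀ x ∈ Icc a b, HasDerivAt g (deriv g x) x :=
    fun hg x hx => ((hg.differentiableOn one_ne_zero x (hsub hx)).differentiableAt
      (hI.mem_nhds (hsub hx))).hasDerivAt
  refine norm_integral_mul_cexp_le_of_hasDerivAt hab.le (hderiv (hφ.of_le (by norm_num)))
    (hderiv hφ') ((hφ'.continuousOn_deriv_of_isOpen hI le_rfl).mono hsub) ?_ hω hlam hlb hf hf' hB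
  have hacc : ∀ x ∈ Icc a b, AccPt x (Filter.principal (Icc a b)) := fun x hx =>
    (uniqueDiffOn_Icc hab x hx).accPt
  exact hmono.imp
    (fun h x hx => (hderiv hφ' x hx).hasDerivWithinAt.nonneg_of_monotoneOn (hacc x hx) h)
    (fun h x hx => (hderiv hφ' x hx).hasDerivWithinAt.nonpos_of_antitoneOn (hacc x hx) h)

theorem intervalIntegrable_deriv_of_norm {u : ℝ → ℂ}
    (hu : IntervalIntegrable (fun x => ‖deriv u x‖) volume a b) :
    IntervalIntegrable (deriv u) volume a b :=
  ⟨(integrable_norm_iff (measurable_deriv u).aestronglyMeasurable).1 hu.1,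
    (integrable_norm_iff (measurable_deriv u).aestronglyMeasurable).1 hu.2⟩

theorem norm_integral_le_of_ends_of_middle {E : Type*} [NormedAddCommGroup E] [NormedSpace ℝ E]
    {F : ℝ → E} {δ A C : ℝ} (hab : a ≤ b) (hδ : 0 ≤ δ) (hF : IntervalIntegrable F volume a b)
    (hend : ∀ c e, a ≤ c → c ≤ e → e ≤ b → e - c ≤ δ → ‖∫ x in c..e, F x‖ ≤ A)
    (hmid : a + δ ≤ b - δ → ‖∫ x in (a + δ)..(b - δ), F x‖ ≤ C) (hC : 0 ≤ C) :
    ‖∫ x in a..b, F x‖ ≤ 2 * A + C := by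
  have hF' : ∀ c e, c ∈ Icc a b → e ∈ Icc a b → IntervalIntegrable F volume c e :=
    fun c e hc he => hF.mono_set (uIcc_subset_uIcc (uIcc_of_le hab ▸ hc) (uIcc_of_le hab ▸ he))
  rcases lt_or_ge (b - δ) (a + δ) with hshort | hlong
  · have hmid : (a + b) / 2 ∈ Icc a b := ⟨by linarith, by linarith⟩
    rw [← integral_add_adjacent_intervals (hF' a _ ⟨le_rfl, hab⟩ hmid) (hF' _ b hmid ⟨hab, le_rfl⟩)]
    calc _ ≤ A + A := (norm_add_le _ _).trans (add_le_add
          (hend _ _ le_rfl (by linarith) (by linarith) (by linarith))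
          (hend _ _ (by linarith) (by linarith) le_rfl (by linarith)))
      _ ≤ 2 * A + C := by linarith
  · have ha : a + δ ∈ Icc a b := ⟨by linarith, by linarith⟩
    have hb : b - δ ∈ Icc a b := ⟨by linarith, by linarith⟩
    rw [← integral_add_adjacent_intervals (hF' a (a + δ) ⟨le_rfl, hab⟩ ha)
      ((hF' _ _ ha hb).trans (hF' _ b hb ⟨hab, le_rfl⟩)),
      ← integral_add_adjacent_intervals (hF' _ _ ha hb) (hF' _ b hb ⟨hab, le_rfl⟩)]
    calc _ ≤ A + (C + A) := (norm_add_le _ _).trans (add_le_add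
          (hend _ _ le_rfl (by linarith) (by linarith) (by linarith))
          ((norm_add_le _ _).trans (add_le_add (hmid hlong)
            (hend _ _ (by linarith) (by linarith) le_rfl (by linarith)))))
      _ = 2 * A + C := by ring

section SingularAmplitude

variable {c μ : ℝ}

theorem intervalIntegrable_sub_rpow (hμ : 0 < μ) :
    IntervalIntegrable (fun x => (x - c) ^ (μ - 1)) volume a b := by
  simpa using (intervalIntegrable_rpow' (a := a - c) (b := b - c) (r := μ - 1)
    (by linarith)).comp_sub_right c

theorem integral_sub_rpow_le (hca : c ≤ a) (hab : a ≤ b) (hμ0 : 0 < μ) (hμ1 : μ ≤ 1) :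
    ∫ x in a..b, (x - c) ^ (μ - 1) ≤ (b - a) ^ μ / μ := by
  rw [integral_comp_sub_right (fun x => x ^ (μ - 1)), integral_rpow (Or.inl (by linarith)),
    sub_add_cancel]
  gcongr
  have := Real.rpow_add_le_add_rpow (sub_nonneg.2 hca) (sub_nonneg.2 hab) hμ0.le hμ1
  rw [sub_add_sub_cancel'] at this
  linarith

theorem norm_integral_rpow_mul_le {g : ℝ → ℂ} {M : ℝ} (hca : c ≤ a) (hab : a ≤ b) (hμ0 : 0 < μ)
    (hμ1 : μ ≤ 1) (hg : ∀ x ∈ Icc a b, ‖g x‖ ≤ M) :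
    ‖∫ x in a..b, ((x - c) ^ (μ - 1) : ℝ) * g x‖ ≤ M * ((b - a) ^ μ / μ) := by
  have hM : 0 ≤ M := (norm_nonneg _).trans (hg a (left_mem_Icc.2 hab))
  refine (norm_integral_le_of_norm_le hab (ae_of_all _ fun x hx => ?_)
    ((intervalIntegrable_sub_rpow (c := c) hμ0).const_mul M)).trans ?_
  · have hx' : 0 ≤ x - c := by linarith [hx.1]
    rw [norm_mul, Complex.norm_real, Real.norm_eq_abs, abs_of_nonneg (Real.rpow_nonneg hx' _),
      mul_comm]
    exact mul_le_mul_of_nonneg_right (hg x (Ioc_subset_Icc_self hx)) (Real.rpow_nonneg hx' _)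
  · rw [intervalIntegral.integral_const_mul]
    exact mul_le_mul_of_nonneg_left (integral_sub_rpow_le hca hab hμ0 hμ1) hM

theorem norm_integral_rpow_mul_cexp_le {φ : ℝ → ℝ} {I : Set ℝ} {u : ℝ → ℂ} {ω lam M : ℝ}
    (hI : IsOpen I) (hφ : ContDiffOn ℝ 2 φ I) (hca : c < a) (hab : a ≤ b) (hsub : Icc a b ⊆ I)
    (hmono : MonotoneOn (deriv φ) (Icc a b) ∨ AntitoneOn (deriv φ) (Icc a b))
    (hω : 0 < ω) (hlam : 0 < lam) (hlb : ∀ x ∈ Icc a b, lam ≤ |deriv φ x|) (hμ1 : μ ≤ 1)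
    (hu : ∀ x ∈ Icc a b, DifferentiableAt ℝ u x) (hu' : IntervalIntegrable (deriv u) volume a b)
    (hM : ∀ x ∈ Icc a b, ‖u x‖ ≤ M) :
    ‖∫ x in a..b, ((x - c) ^ (μ - 1) : ℝ) * (u x * Complex.exp (Complex.I * ω * φ x))‖ ≤
      (ω * lam)⁻¹ * ((a - c) ^ (μ - 1) * (4 * M + ∫ x in a..b, ‖deriv u x‖)) := by
  conv_lhs => simp only [← mul_assoc]
  have hpos : ∀ x ∈ Icc a b, 0 < x - c := fun x hx => by linarith [hx.1]
  have hg : ∀ x ∈ Icc a b, HasDerivAt (fun x => (x - c) ^ (μ - 1))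
      ((μ - 1) * (x - c) ^ (μ - 1 - 1)) x := fun x hx => by
    simpa using ((hasDerivAt_id x).sub_const c).rpow_const (p := μ - 1) (Or.inl (hpos x hx).ne')
  have hg' : IntervalIntegrable (fun x => (μ - 1) * (x - c) ^ (μ - 1 - 1)) volume a b := by
    refine ContinuousOn.intervalIntegrable (uIcc_of_le hab ▸ ?_)
    exact continuousOn_const.mul
      ((continuousOn_id.sub continuousOn_const).rpow_const fun x hx => Or.inl (hpos x hx).ne')
  have hgsign : ∀ x ∈ Icc a b, (μ - 1) * (x - c) ^ (μ - 1 - 1) ≤ 0 := fun x hx =>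
    mul_nonpos_of_nonpos_of_nonneg (by linarith) (Real.rpow_nonneg (hpos x hx).le _)
  have hgle : ∀ x ∈ Icc a b, |(x - c) ^ (μ - 1)| ≤ (a - c) ^ (μ - 1) := fun x hx => by
    rw [abs_of_nonneg (Real.rpow_nonneg (hpos x hx).le _)]
    exact Real.rpow_le_rpow_of_nonpos (sub_pos.2 hca) (by linarith [hx.1]) (by linarith)
  have hgab : 0 ≤ (a - c) ^ (μ - 1) * (b - c) ^ (μ - 1) :=
    mul_nonneg (Real.rpow_nonneg (sub_pos.2 hca).le _) (Real.rpow_nonneg (by linarith) _)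
  have hbound : ∀ x ∈ Icc a b, ‖((x - c) ^ (μ - 1) : ℝ) * u x‖ ≤ (a - c) ^ (μ - 1) * M :=
    fun x hx => by
      rw [norm_mul, Complex.norm_real, Real.norm_eq_abs]
      exact mul_le_mul (hgle x hx) (hM x hx) (norm_nonneg _) (Real.rpow_nonneg (sub_pos.2 hca).le _)
  have hvar := integral_norm_deriv_ofReal_mul_le hab hg hg' (Or.inr hgsign) hgle hgab
    (fun x hx => (hu x hx).hasDerivAt) hu' hM
  refine (norm_integral_mul_cexp_le hI hφ hab hsub hmono hω hlam hlb
    (fun x hx => ((hg x hx).ofReal_comp).mul (hu x hx).hasDerivAt)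
    (intervalIntegrable_deriv_ofReal_mul hab hg hg' (fun x hx => (hu x hx).hasDerivAt) hu')
    hbound).trans (mul_le_mul_of_nonneg_left ?_ (by positivity))
  linarith

end SingularAmplitude

theorem le_abs_sub_of_notMem_Icc {p₀ p₁ p₂ δ x : ℝ} (hp₀ : p₀ ∉ Icc p₁ p₂)
    (hx : x ∈ Icc (p₁ + δ) (p₂ - δ)) : δ ≤ |x - p₀| := by
  rw [mem_Icc, not_and_or, not_le, not_le] at hp₀
  rcases hp₀ with h | h
  exacts [le_abs.2 (Or.inl (by linarith [hx.1])), le_abs.2 (Or.inr (by linarith [hx.2]))]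

theorem mul_rpow_le_abs_deriv {ψ ψt : ℝ → ℝ} {I : Set ℝ} {p₀ p₁ p₂ ρ m δ : ℝ}
    (hfact : ∀ p ∈ I, deriv ψ p = |p - p₀| ^ (ρ - 1) * ψt p) (hρ : 1 ≤ ρ) (hδ : 0 ≤ δ)
    (hp₀ : p₀ ∉ Icc p₁ p₂) (hI : Icc p₁ p₂ ⊆ I)
    (hmin : IsLeast ((fun p => |ψt p|) '' Icc p₁ p₂) m) :
    ∀ x ∈ Icc (p₁ + δ) (p₂ - δ), m * δ ^ (ρ - 1) ≤ |deriv ψ x| := by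
  intro x hx
  have hx' : x ∈ Icc p₁ p₂ := ⟨by linarith [hx.1, hx.2], by linarith [hx.1, hx.2]⟩
  rw [hfact x (hI hx'), abs_mul, abs_of_nonneg (Real.rpow_nonneg (abs_nonneg _) _),
    mul_comm (|x - p₀| ^ (ρ - 1))]
  exact mul_le_mul (hmin.2 (mem_image_of_mem _ hx'))
    (Real.rpow_le_rpow hδ (le_abs_sub_of_notMem_Icc hp₀ hx) (by linarith))
    (Real.rpow_nonneg hδ _) (abs_nonneg _)

theorem norm_integral_middle_le {p₁ p₂ p₀ ρ μ m δ ω M : ℝ} {I : Set ℝ} {ψ ψt : ℝ → ℝ}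
    {ut : ℝ → ℂ} (hIopen : IsOpen I) (hIsub : Icc p₁ p₂ ⊆ I) (hψ : ContDiffOn ℝ 2 ψ I)
    (hfact : ∀ p ∈ I, deriv ψ p = |p - p₀| ^ (ρ - 1) * ψt p) (hp₀ : p₀ ∉ Icc p₁ p₂)
    (hmono : MonotoneOn (deriv ψ) (Icc p₁ p₂) ∨ AntitoneOn (deriv ψ) (Icc p₁ p₂))
    (hmin : IsLeast ((fun p => |ψt p|) '' Icc p₁ p₂) m) (hm : 0 < m) (hρ : 1 ≤ ρ) (hμ1 : μ ≤ 1)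
    (hdiff : ∀ p ∈ Ioo p₁ p₂, DifferentiableAt ℝ ut p)
    (hint : IntervalIntegrable (fun p => ‖deriv ut p‖) volume p₁ p₂)
    (hM : ∀ x ∈ Icc p₁ p₂, ‖ut x‖ ≤ M) (hω : 0 < ω) (hδ : 0 < δ) (hmid : p₁ + δ ≤ p₂ - δ) :
    ‖∫ x in (p₁ + δ)..(p₂ - δ),
        ((x - p₁) ^ (μ - 1) : ℝ) * (ut x * Complex.exp (Complex.I * ω * ψ x))‖ ≤
      (ω * (m * δ ^ (ρ - 1)))⁻¹ * (δ ^ (μ - 1) * (4 * M + ∫ x in p₁..p₂, ‖deriv ut x‖)) := by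
  have hsub : Icc (p₁ + δ) (p₂ - δ) ⊆ Icc p₁ p₂ := Icc_subset_Icc (by linarith) (by linarith)
  refine (norm_integral_rpow_mul_cexp_le hIopen hψ (by linarith) hmid (hsub.trans hIsub)
    (hmono.imp (·.mono hsub) (·.mono hsub)) hω (by positivity)
    (mul_rpow_le_abs_deriv hfact hρ hδ.le hp₀ hIsub hmin) hμ1
    (fun x hx => hdiff x ⟨by linarith [hx.1], by linarith [hx.2]⟩)
    ((intervalIntegrable_deriv_of_norm hint).mono_set
      (by rwa [uIcc_of_le hmid, uIcc_of_le (by linarith : p₁ ≤ p₂)]))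
    (fun x hx => hM x (hsub hx))).trans ?_
  rw [add_sub_cancel_left]
  gcongr
  exact integral_mono_interval (by linarith) hmid (by linarith)
    (ae_of_all _ fun x => norm_nonneg _) hint

theorem vdc_stationary_outside_general
    (p₁ p₂ : ℝ) (hp : p₁ < p₂) (ρ μ : ℝ) (hρ : 1 < ρ) (hμ : μ ∈ Set.Ioc (0:ℝ) 1)
    (I : Set ℝ) (hIopen : IsOpen I) (hIsub : Set.Icc p₁ p₂ ⊆ I)
    (p₀ : ℝ) (hp₀ : p₀ ∈ I \ Set.Icc p₁ p₂)
    (ψ : ℝ → ℝ) (ψt : ℝ → ℝ)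
    (hψ : ContDiffOn ℝ 2 ψ I)
    (hfact : ∀ p ∈ I, deriv ψ p = |p - p₀| ^ (ρ - 1) * ψt p)
    (hmono : MonotoneOn (deriv ψ) (Set.Icc p₁ p₂) ∨
      AntitoneOn (deriv ψ) (Set.Icc p₁ p₂))
    (m : ℝ) (hm : 0 < m)
    (hmin : IsLeast ((fun p => |ψt p|) '' Set.Icc p₁ p₂) m)
    (ut : ℝ → ℂ)
    (hcont : ContinuousOn ut (Set.Icc p₁ p₂))
    (hdiff : ∀ p ∈ Set.Ioo p₁ p₂, DifferentiableAt ℝ ut p)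
    (hint : IntervalIntegrable (fun p => ‖deriv ut p‖) MeasureTheory.volume p₁ p₂)
    (U : ℝ → ℂ)
    (hU : ∀ p ∈ Set.Ioc p₁ p₂, U p = (((p - p₁) ^ (μ - 1) : ℝ) : ℂ) * ut p) :
    ∀ ω : ℝ, 0 < ω →
      ‖∫ p in p₁..p₂, U p * Complex.exp (Complex.I * ω * ψ p)‖ ≤
        ((2 / μ) * (⨆ p : Set.Icc p₁ p₂, ‖ut (p : ℝ)‖) +
          (4 * (⨆ p : Set.Icc p₁ p₂, ‖ut (p : ℝ)‖) +
            ∫ p in p₁..p₂, ‖deriv ut p‖) * m⁻¹) * ω ^ (-(μ / ρ)) := by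
  intro ω hω
  obtain ⟨hμ0, hμ1⟩ := hμ
  set M := ⨆ p : Set.Icc p₁ p₂, ‖ut (p : ℝ)‖
  set V := ∫ p in p₁..p₂, ‖deriv ut p‖
  set δ := ω ^ (-ρ⁻¹) with hδ_def
  have hδ : 0 < δ := Real.rpow_pos_of_pos hω _
  have hM : ∀ x ∈ Icc p₁ p₂, ‖ut x‖ ≤ M := fun x hx => isCompact_Icc.norm_le_iSup hcont hx
  have hM0 : 0 ≤ M := (norm_nonneg _).trans (hM p₁ (left_mem_Icc.2 hp.le))
  have hV0 : 0 ≤ V := integral_nonneg hp.le fun x _ => norm_nonneg _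
  rw [intervalIntegral.integral_congr_ae
    (ae_of_all _ fun x hx => by rw [hU x (uIoc_of_le hp.le ▸ hx), mul_assoc])]
  refine (norm_integral_le_of_ends_of_middle (A := M * (δ ^ μ / μ))
    (C := (ω * (m * δ ^ (ρ - 1)))⁻¹ * (δ ^ (μ - 1) * (4 * M + V))) hp.le hδ.le ?_ ?_ ?_
    (by positivity)).trans_eq ?_
  · have hψc := hψ.continuousOn.mono hIsub
    refine (intervalIntegrable_sub_rpow hμ0).ofReal.mul_continuousOn (uIcc_of_le hp.le ▸ ?_)
    fun_prop
  · intro c e hc hce he hlen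
    refine (norm_integral_rpow_mul_le hc hce hμ0 hμ1 fun x hx => ?_).trans (by gcongr)
    rw [norm_mul, norm_cexp_I_mul_ofReal_mul, mul_one]
    exact hM x ⟨hc.trans hx.1, hx.2.trans he⟩
  · exact norm_integral_middle_le hIopen hIsub hψ hfact hp₀.2 hmono hmin hm hρ.le hμ1 hdiff hint
      hM hω hδ
  · have hωδ : ω * δ ^ ρ = 1 := by
      rw [hδ_def, ← Real.rpow_mul hω.le, neg_mul, inv_mul_cancel₀ (by linarith),
        Real.rpow_neg_one, mul_inv_cancel₀ hω.ne']
    have hδμ : δ ^ μ = ω ^ (-(μ / ρ)) := by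
      rw [hδ_def, ← Real.rpow_mul hω.le, neg_mul, inv_mul_eq_div]
    rw [Real.rpow_sub_one hδ.ne', Real.rpow_sub_one hδ.ne', ← hδμ]
    field_simp
    linear_combination -(μ * (4 * M + V)) * hωδ

theorem vdc_stationary_outside
    (p₁ p₂ : ℝ) (hp : p₁ < p₂) (ρ μ : ℝ) (hρ : 1 < ρ) (hμ : μ ∈ Set.Ioc (0:ℝ) 1)
    (I : Set ℝ) (hIopen : IsOpen I) (hIsub : Set.Icc p₁ p₂ ⊆ I)
    (p₀ : ℝ) (hp₀ : p₀ ∈ I \ Set.Icc p₁ p₂)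
    (ψ : ℝ → ℝ) (ψt : ℝ → ℝ)
    (hψ : ContDiffOn ℝ 2 ψ I)
    (hfact : ∀ p ∈ I, deriv ψ p = |p - p₀| ^ (ρ - 1) * ψt p)
    (hψtcont : ContinuousOn (fun p => |ψt p|) I)
    (hψtne : ∀ p ∈ I, ψt p ≠ 0)
    (hmono : MonotoneOn (deriv ψ) (Set.Icc p₁ p₂) ∨
      AntitoneOn (deriv ψ) (Set.Icc p₁ p₂))
    (m : ℝ) (hm : 0 < m)
    (hmin : IsLeast ((fun p => |ψt p|) '' Set.Icc p₁ p₂) m)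
    (ut : ℝ → ℂ)
    (hcont : ContinuousOn ut (Set.Icc p₁ p₂))
    (hdiff : ∀ p ∈ Set.Ioo p₁ p₂, DifferentiableAt ℝ ut p)
    (hint : IntervalIntegrable (fun p => ‖deriv ut p‖) MeasureTheory.volume p₁ p₂)
    (U : ℝ → ℂ)
    (hU : ∀ p ∈ Set.Ioc p₁ p₂, U p = (((p - p₁) ^ (μ - 1) : ℝ) : ℂ) * ut p) :
    ∀ ω : ℝ, 0 < ω →
      ‖∫ p in p₁..p₂, U p * Complex.exp (Complex.I * ω * ψ p)‖ ≤
        ((2 / μ) * (⨆ p : Set.Icc p₁ p₂, ‖ut (p : ℝ)‖) +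
          (4 * (⨆ p : Set.Icc p₁ p₂, ‖ut (p : ℝ)‖) +
            ∫ p in p₁..p₂, ‖deriv ut p‖) * m⁻¹) * ω ^ (-(μ / ρ)) :=
  vdc_stationary_outside_general p₁ p₂ hp ρ μ hρ hμ I hIopen hIsub p₀ hp₀ ψ ψt hψ hfact hmono m hm
    hmin ut hcont hdiff hint U hU
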